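/- Let L′ be a regular language over a finite alphabet Σ, let 𝔽 be the word comparison function associated with a cost function C, let k ∈ ℕ and let a ∈ Σ. Set 𝒲 = ({b ∈ Σ | C(ε,b) = 0})* and X(L′) = {L′} ∪ {w⁻¹(L′) | w ∈ 𝒲}. Then a⁻¹(𝔽_k(L′)) = ⋃_{L″∈X(L′), b∈Σ} 𝔽_{k−C(a,b)}(b⁻¹(L″)) ∪ ⋃_{L″∈X(L′)} 𝔽_{k−C(a,ε)}(L″) ∪ a⁻¹( ⋃_{L″∈X(L′), b∈Σ, C(ε,b)≠0} 𝔽_{k−C(ε,b)}(b⁻¹(L″)) ). -/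

import Mathlib

/-!
Quotient of an approximate language `𝔽_k(L′)` w.r.t. a symbol
(general word comparison functions).

A cost function over `S × S`, `S = Σ ∪ {ε}`, is a function
`Option σ → Option σ → Option ℕ` (`none : Option σ` is `ε`, `none : Option ℕ`
is the undefined value `⊥`) with `C α α = 0`.  An alignment of two words is a
nonempty list of pairs in `S × S` whose first (resp. second) components
concatenate to the first (resp. second) word; its cost is the `⊥`-absorbing
sum of the costs of its pairs.  `wordComp C u v` is the word comparison
function `𝔽(u,v)`: the minimum cost of an alignment, `⊥` if none is defined.

For `k ∈ ℕ ∪ {⊥}`, `ball C k L` is `𝔽_k(L) = {w | ∃ u ∈ L, 𝔽(w,u) ≤ k}`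
(empty for `k = ⊥`).  `subO k x` is `k - x` where `k - x = ⊥` when `x = ⊥` or
`x > k`.  `leftQuot a L` (resp. `wordQuot u L`) is `a⁻¹(L)` (resp. `u⁻¹(L)`).
`𝒲 = ({b ∈ Σ | C(ε,b) = 0})*` is encoded as the set of words all of whose
letters `b` satisfy `C ε b = 0`, and `X L′ = {L′} ∪ {w⁻¹(L′) | w ∈ 𝒲}`.
Unions of languages are the lattice operations `⊔`/`⨆` on `Language σ`.
-/

/-- A cost function: `C α α = 0` for every `α ∈ Σ ∪ {ε}`. -/
structure CostFun (σ : Type) where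
  C : Option σ → Option σ → Option ℕ
  refl : ∀ α, C α α = some 0

/-- The cost of an alignment: the `⊥`-absorbing sum of the costs of its pairs. -/
def alignCost {σ : Type} (C : CostFun σ) (l : List (Option σ × Option σ)) : Option ℕ :=
  (l.map fun p => C.C p.1 p.2).foldr (fun x y => Option.map₂ (· + ·) x y) (some 0)

/-- The set of defined costs of alignments (of size `≥ 1`) between `u` and `v`. -/
def alignCosts {σ : Type} (C : CostFun σ) (u v : List σ) : Set ℕ :=
  {n | ∃ l : List (Option σ × Option σ), l ≠ [] ∧
        l.filterMap Prod.fst = u ∧ l.filterMap Prod.snd = v ∧ alignCost C l = some n}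

/-- The word comparison function `𝔽` associated with a cost function. -/
noncomputable def wordComp {σ : Type} (C : CostFun σ) (u v : List σ) : Option ℕ := by
  classical
  exact if (alignCosts C u v).Nonempty then some (sInf (alignCosts C u v)) else none

/-- `𝔽_k(L)`: the words `w` such that `𝔽(w,u) ∈ ⟦0,k⟧` for some `u ∈ L`;
empty for `k = ⊥`. -/
noncomputable def ball {σ : Type} (C : CostFun σ) (k : Option ℕ) (L : Language σ) :
    Language σ :=
  match k with
  | none => ⊥
  | some k => {w | ∃ u ∈ L, ∃ n : ℕ, wordComp C w u = some n ∧ n ≤ k}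

/-- `k - x` on `ℕ ∪ {⊥}` (with `k ∈ ℕ`): `⊥` when `x = ⊥` or `x > k`. -/
def subO (k : ℕ) (x : Option ℕ) : Option ℕ :=
  x.bind fun m => if m ≤ k then some (k - m) else none

/-- The left quotient `a⁻¹(L)` of a language w.r.t. a symbol. -/
def leftQuot {σ : Type} (a : σ) (L : Language σ) : Language σ :=
  {w | a :: w ∈ L}

/-- The left quotient `u⁻¹(L)` of a language w.r.t. a word. -/
def wordQuot {σ : Type} (u : List σ) (L : Language σ) : Language σ :=
  {w | u ++ w ∈ L}

/-!
Look at an alignment of `a :: w` with a word `u ∈ L′`. The pairs before the one that consumes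
`a` are insertions `(ε, b)`. If they are all free, they spell a word `w' ∈ 𝒲` and the rest is a
pair `(a, β)` followed by an alignment of `w` with a word of `β⁻¹(w'⁻¹ L′)`: this gives the first
two unions. Otherwise the first costly insertion `(ε, b)` follows a free prefix `w'` and is
followed by an alignment of `a :: w` with a word of `b⁻¹(w'⁻¹ L′)`: the third union. Conversely,
prepending one pair and then free insertions to an alignment adds exactly the cost of that pair.
-/

section Quotients

variable {σ : Type}

lemma Language.mem_sup {L M : Language σ} {w : List σ} : w ∈ L ⊔ M ↔ w ∈ L ∨ w ∈ M :=
  Iff.rfl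

lemma mem_leftQuot {a : σ} {L : Language σ} {w : List σ} : w ∈ leftQuot a L ↔ a :: w ∈ L :=
  Iff.rfl

@[simp]
lemma wordQuot_nil (L : Language σ) : wordQuot [] L = L := rfl

lemma insert_setOf_wordQuot_eq_image (L : Language σ) {W : Set (List σ)} (hW : [] ∈ W) :
    insert L {M | ∃ w, w ∈ W ∧ M = wordQuot w L} = (wordQuot · L) '' W := by
  ext M
  simp only [Set.mem_insert_iff, Set.mem_ofPred_eq, Set.mem_image, eq_comm (a := M)]
  exact ⟨fun h => h.elim (fun h => ⟨[], hW, (wordQuot_nil L).trans h⟩) id, Or.inr⟩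

end Quotients

namespace CostFun

variable {σ : Type}

def freeInsertionWords (C : CostFun σ) : Set (List σ) :=
  {w | ∀ b ∈ w, C.C none (some b) = some 0}

@[simp]
lemma nil_mem_freeInsertionWords (C : CostFun σ) : [] ∈ C.freeInsertionWords := by
  simp [freeInsertionWords]

@[simp]
lemma cons_mem_freeInsertionWords {C : CostFun σ} {b : σ} {w : List σ} :
    b :: w ∈ C.freeInsertionWords ↔
      C.C none (some b) = some 0 ∧ w ∈ C.freeInsertionWords := by
  simp [freeInsertionWords]

end CostFun

section Alignment

variable {σ : Type} {C : CostFun σ}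

lemma alignCost_cons (p : Option σ × Option σ) (l : List (Option σ × Option σ)) :
    alignCost C (p :: l) = Option.map₂ (· + ·) (C.C p.1 p.2) (alignCost C l) := rfl

def AlignsWithin (C : CostFun σ) (k : ℕ) (w u : List σ) : Prop :=
  ∃ l : List (Option σ × Option σ), l.filterMap Prod.fst = w ∧ l.filterMap Prod.snd = u ∧
    ∃ n ≤ k, alignCost C l = some n

lemma AlignsWithin.cons {k c : ℕ} {α β : Option σ} {w u : List σ} (hc : C.C α β = some c)
    (h : AlignsWithin C k w u) : AlignsWithin C (c + k) (α.toList ++ w) (β.toList ++ u) := by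
  obtain ⟨l, rfl, rfl, n, hn, hl⟩ := h
  refine ⟨(α, β) :: l, ?_, ?_, c + n, by omega, by simp [alignCost_cons, hc, hl]⟩ <;>
    cases α <;> cases β <;> simp

lemma exists_wordComp_le_iff {k : ℕ} {w u : List σ} :
    (∃ n, wordComp C w u = some n ∧ n ≤ k) ↔ ∃ n ∈ alignCosts C w u, n ≤ k := by
  unfold wordComp
  split_ifs with h
  · simp only [Option.some.injEq, exists_eq_left']
    exact ⟨fun hk => ⟨_, Nat.sInf_mem h, hk⟩, fun ⟨n, hn, hk⟩ => (Nat.sInf_le hn).trans hk⟩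
  · simp [Set.not_nonempty_iff_eq_empty.1 h]

-- The empty alignment is excluded from `alignCosts`; it can be replaced by `[(ε, ε)]`.
lemma alignsWithin_iff {k : ℕ} {w u : List σ} :
    AlignsWithin C k w u ↔ ∃ n ∈ alignCosts C w u, n ≤ k := by
  constructor
  · rintro ⟨l, hw, hu, n, hnk, hl⟩
    rcases eq_or_ne l [] with rfl | hne
    · refine ⟨0, ⟨[(none, none)], by simp, hw, hu, ?_⟩, Nat.zero_le _⟩
      simp [C.refl, alignCost]
    · exact ⟨n, ⟨l, hne, hw, hu, hl⟩, hnk⟩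
  · rintro ⟨n, ⟨l, -, hw, hu, hl⟩, hnk⟩
    exact ⟨l, hw, hu, n, hnk, hl⟩

lemma mem_ball_some_iff {k : ℕ} {L : Language σ} {w : List σ} :
    w ∈ ball C (some k) L ↔ ∃ u ∈ L, AlignsWithin C k w u := by
  simp only [alignsWithin_iff, ← exists_wordComp_le_iff]
  rfl

lemma ball_none (L : Language σ) : ball C none L = 0 := rfl

lemma mem_ball_subO_iff {k : ℕ} {x : Option ℕ} {L : Language σ} {w : List σ} :
    w ∈ ball C (subO k x) L ↔ ∃ c ≤ k, x = some c ∧ w ∈ ball C (some (k - c)) L := by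
  cases x with
  | none => simp [subO, ball_none, Language.notMem_zero]
  | some c =>
    by_cases hc : c ≤ k
    · simp [subO, hc]
    · simp [subO, hc, ball_none, Language.notMem_zero]

end Alignment

section Ball

variable {σ : Type} {C : CostFun σ}

lemma ball_subO_le_wordQuot (k : ℕ) (α β : Option σ) (L : Language σ) :
    ball C (subO k (C.C α β)) (wordQuot β.toList L) ≤ wordQuot α.toList (ball C (some k) L) := by
  intro w hw
  obtain ⟨c, hck, hc, hw⟩ := mem_ball_subO_iff.1 hw
  obtain ⟨u, hu, hwu⟩ := mem_ball_some_iff.1 hw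
  refine mem_ball_some_iff.2 ⟨β.toList ++ u, hu, ?_⟩
  simpa [Nat.add_sub_cancel' hck] using hwu.cons hc

lemma ball_wordQuot_le_ball (k : ℕ) {w : List σ} (hw : w ∈ C.freeInsertionWords)
    (L : Language σ) : ball C (some k) (wordQuot w L) ≤ ball C (some k) L := by
  induction w generalizing L with
  | nil => rfl
  | cons b w ih =>
    rw [CostFun.cons_mem_freeInsertionWords] at hw
    have hb := ball_subO_le_wordQuot (C := C) k none (some b) L
    rw [hw.1] at hb
    exact (ih hw.2 (wordQuot [b] L)).trans (by simpa [subO] using hb)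

lemma exists_of_cons_mem_ball {k : ℕ} {a : σ} {w : List σ} {L : Language σ}
    (h : a :: w ∈ ball C (some k) L) : ∃ w' ∈ C.freeInsertionWords,
      (∃ β, w ∈ ball C (subO k (C.C (some a) β)) (wordQuot β.toList (wordQuot w' L))) ∨
      ∃ b, C.C none (some b) ≠ some 0 ∧
        a :: w ∈ ball C (subO k (C.C none (some b))) (leftQuot b (wordQuot w' L)) := by
  obtain ⟨_, hu, l, hw, rfl, n, hnk, hl⟩ := mem_ball_some_iff.1 h
  clear h
  induction l generalizing L n with
  | nil => simp at hw
  | cons p t ih =>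
    obtain ⟨α, β⟩ := p
    obtain ⟨c, m, hc, ht, rfl⟩ :
        ∃ c m, C.C α β = some c ∧ alignCost C t = some m ∧ c + m = n := by
      simpa [alignCost_cons, Option.map₂_eq_some_iff] using hl
    cases α with
    | some a' =>
      simp only [List.filterMap_cons, List.cons.injEq] at hw
      obtain ⟨rfl, hw⟩ := hw
      refine ⟨[], C.nil_mem_freeInsertionWords,
        Or.inl ⟨β, mem_ball_subO_iff.2 ⟨c, by omega, hc, ?_⟩⟩⟩
      refine mem_ball_some_iff.2 ⟨_, ?_, t, hw, rfl, m, by omega, ht⟩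
      cases β <;> exact hu
    | none =>
      replace hw : t.filterMap Prod.fst = a :: w := by simpa using hw
      cases β with
      | none =>
        obtain rfl : c = 0 := by simpa [C.refl] using hc.symm
        exact ih hw hu m (by omega) ht
      | some b =>
        by_cases hb : C.C none (some b) = some 0
        · obtain rfl : c = 0 := by simpa [hb] using hc.symm
          obtain ⟨w', hw', hcases⟩ := ih (L := wordQuot [b] L) hw hu m (by omega) ht
          exact ⟨b :: w', CostFun.cons_mem_freeInsertionWords.2 ⟨hb, hw'⟩, hcases⟩
        · refine ⟨[], C.nil_mem_freeInsertionWords,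
            Or.inr ⟨b, hb, mem_ball_subO_iff.2 ⟨c, by omega, hc, ?_⟩⟩⟩
          exact mem_ball_some_iff.2 ⟨_, hu, t, hw, rfl, m, by omega, ht⟩

end Ball

theorem quotient_ball_general {σ : Type}
    (C : CostFun σ) (L' : Language σ) (k : ℕ) (a : σ)
    (X : Set (Language σ))
    (hX : X = insert L' {M | ∃ w : List σ,
        (∀ b ∈ w, C.C none (some b) = some 0) ∧ M = wordQuot w L'}) :
    leftQuot a (ball C (some k) L') =
      (⨆ L'' ∈ X, ⨆ b : σ, ball C (subO k (C.C (some a) (some b))) (leftQuot b L'')) ⊔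
      (⨆ L'' ∈ X, ball C (subO k (C.C (some a) none)) L'') ⊔
      leftQuot a (⨆ L'' ∈ X, ⨆ b ∈ {b : σ | C.C none (some b) ≠ some 0},
        ball C (subO k (C.C none (some b))) (leftQuot b L'')) := by
  replace hX : X = (wordQuot · L') '' C.freeInsertionWords :=
    hX.trans (insert_setOf_wordQuot_eq_image L' C.nil_mem_freeInsertionWords)
  subst hX
  ext w
  simp only [Language.mem_sup, mem_leftQuot, Language.mem_iSup, exists_prop, Set.mem_image,
    exists_exists_and_eq_and, Set.mem_ofPred_eq]
  constructor
  · intro h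
    obtain ⟨w', hw', ⟨β, hβ⟩ | ⟨b, hb, hab⟩⟩ := exists_of_cons_mem_ball h
    · cases β with
      | none => exact Or.inl (Or.inr ⟨w', hw', hβ⟩)
      | some b => exact Or.inl (Or.inl ⟨w', hw', b, hβ⟩)
    · exact Or.inr ⟨w', hw', b, hb, hab⟩
  · rintro ((⟨w', hw', b, h⟩ | ⟨w', hw', h⟩) | ⟨w', hw', b, -, h⟩)
    · exact ball_wordQuot_le_ball k hw' L' (ball_subO_le_wordQuot k (some a) (some b) _ h)
    · exact ball_wordQuot_le_ball k hw' L' (ball_subO_le_wordQuot k (some a) none _ h)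
    · exact ball_wordQuot_le_ball k hw' L' (ball_subO_le_wordQuot k none (some b) _ h)

/-- **Quotient formula for a general similarity operator.**  For a regular
language `L′`, a cost function `C` with associated word comparison function
`𝔽 = wordComp C`, `k ∈ ℕ` and `a ∈ Σ`:
`a⁻¹(𝔽_k(L′)) = ⋃_{L″ ∈ X(L′), b ∈ Σ} 𝔽_{k-C(a,b)}(b⁻¹(L″))
  ∪ ⋃_{L″ ∈ X(L′)} 𝔽_{k-C(a,ε)}(L″)
  ∪ a⁻¹(⋃_{L″ ∈ X(L′), b ∈ Σ, C(ε,b) ≠ 0} 𝔽_{k-C(ε,b)}(b⁻¹(L″)))`,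
where `X(L′) = {L′} ∪ {w⁻¹(L′) | w ∈ ({b | C(ε,b) = 0})*}`. -/
theorem quotient_ball {σ : Type} [Fintype σ]
    (C : CostFun σ) (L' : Language σ) (hL' : L'.IsRegular) (k : ℕ) (a : σ)
    (X : Set (Language σ))
    (hX : X = insert L' {M | ∃ w : List σ,
        (∀ b ∈ w, C.C none (some b) = some 0) ∧ M = wordQuot w L'}) :
    leftQuot a (ball C (some k) L') =
      (⨆ L'' ∈ X, ⨆ b : σ, ball C (subO k (C.C (some a) (some b))) (leftQuot b L'')) ⊔
      (⨆ L'' ∈ X, ball C (subO k (C.C (some a) none)) L'') ⊔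
      leftQuot a (⨆ L'' ∈ X, ⨆ b ∈ {b : σ | C.C none (some b) ≠ some 0},
        ball C (subO k (C.C none (some b))) (leftQuot b L'')) :=
  quotient_ball_general C L' k a X hX
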